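/- arXiv:2401.09991 — 4 statements merged into one kernel-verified Lean document; each statement's English description precedes it below -/
import Mathlib

section
/- Define L : ℝ × (0, ∞) → ℝ by L(v, λ) = (√(1 + 4λv²) - 1)/(2λ). Then L satisfies the partial differential equation ∂_λ L = L² - v · L · ∂_v L for all v ∈ ℝ and λ > 0, and lim_{λ → 0⁺} L(v, λ) = v². -/
open Real Filter Topology

/-! With `s = √(1 + 4λv²)` one has `s² - 1 = 4λv²`, so `L = (s - 1)/(2λ) = 2v²/(s + 1)`.
The derivatives are `∂_v L = 2v/s` and `∂_λ L = -L²/s`, and the flow equation reduces to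
`2v² = L (s + 1)`. The rationalised form is continuous at `λ = 0`, where it equals `v²`. -/

noncomputable def ttbarLagrangian (v lam : ℝ) : ℝ :=
  (√(1 + 4 * lam * v ^ 2) - 1) / (2 * lam)

section

variable {v lam : ℝ}

theorem ttbarLagrangian_eq_div_sqrt_add_one (hlam : lam ≠ 0) (hpos : 0 ≤ 1 + 4 * lam * v ^ 2) :
    ttbarLagrangian v lam = 2 * v ^ 2 / (√(1 + 4 * lam * v ^ 2) + 1) := by
  have hs2 := sq_sqrt hpos
  have hs1 : 0 < √(1 + 4 * lam * v ^ 2) + 1 := by positivity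
  rw [ttbarLagrangian, div_eq_div_iff (by positivity) hs1.ne']
  linear_combination hs2

theorem hasDerivAt_ttbarLagrangian_field (hlam : lam ≠ 0) (hpos : 0 < 1 + 4 * lam * v ^ 2) :
    HasDerivAt (fun w => ttbarLagrangian w lam) (2 * v / √(1 + 4 * lam * v ^ 2)) v := by
  have hs : √(1 + 4 * lam * v ^ 2) ≠ 0 := (sqrt_pos.mpr hpos).ne'
  have hinner : HasDerivAt (fun w : ℝ => 1 + 4 * lam * w ^ 2) (8 * lam * v) v := by
    simpa using (((hasDerivAt_pow 2 v).const_mul (4 * lam)).const_add 1).congr_deriv (by ring)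
  refine ((hinner.sqrt hpos.ne').sub_const 1).div_const (2 * lam) |>.congr_deriv ?_
  field_simp
  ring

theorem hasDerivAt_ttbarLagrangian_coupling (hlam : lam ≠ 0) (hpos : 0 < 1 + 4 * lam * v ^ 2) :
    HasDerivAt (fun t => ttbarLagrangian v t)
      (-ttbarLagrangian v lam ^ 2 / √(1 + 4 * lam * v ^ 2)) lam := by
  have hs2 := sq_sqrt hpos.le
  have hs : √(1 + 4 * lam * v ^ 2) ≠ 0 := (sqrt_pos.mpr hpos).ne'
  have hinner : HasDerivAt (fun t : ℝ => 1 + 4 * t * v ^ 2) (4 * v ^ 2) lam := by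
    simpa using (((hasDerivAt_id lam).const_mul 4).mul_const (v ^ 2)).const_add 1
  refine ((hinner.sqrt hpos.ne').sub_const 1).div ((hasDerivAt_id lam).const_mul 2)
    (mul_ne_zero two_ne_zero hlam) |>.congr_deriv ?_
  simp only [ttbarLagrangian, id]
  set s := √(1 + 4 * lam * v ^ 2)
  field_simp
  linear_combination -hs2

theorem ttbarLagrangian_flow (hlam : 0 < lam) :
    deriv (fun t => ttbarLagrangian v t) lam =
      ttbarLagrangian v lam ^ 2 -
        v * ttbarLagrangian v lam * deriv (fun w => ttbarLagrangian w lam) v := by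
  have hpos : 0 < 1 + 4 * lam * v ^ 2 := by positivity
  have hs : √(1 + 4 * lam * v ^ 2) ≠ 0 := (sqrt_pos.mpr hpos).ne'
  have hrat := ttbarLagrangian_eq_div_sqrt_add_one hlam.ne' hpos.le
  rw [(hasDerivAt_ttbarLagrangian_coupling hlam.ne' hpos).deriv,
    (hasDerivAt_ttbarLagrangian_field hlam.ne' hpos).deriv]
  rw [eq_div_iff (by positivity)] at hrat
  field_simp
  linear_combination -ttbarLagrangian v lam * hrat

theorem tendsto_ttbarLagrangian_nhdsGT_zero (v : ℝ) :
    Tendsto (fun lam => ttbarLagrangian v lam) (𝓝[>] 0) (𝓝 (v ^ 2)) := by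
  have hcont : ContinuousAt (fun lam : ℝ => 2 * v ^ 2 / (√(1 + 4 * lam * v ^ 2) + 1)) 0 :=
    ContinuousAt.div (by fun_prop) (by fun_prop) (by positivity)
  have hlim : Tendsto (fun lam : ℝ => 2 * v ^ 2 / (√(1 + 4 * lam * v ^ 2) + 1)) (𝓝[>] 0)
      (𝓝 (v ^ 2)) := by
    convert hcont.tendsto.mono_left nhdsWithin_le_nhds using 2
    norm_num
  refine hlim.congr' (eventually_nhdsWithin_of_forall fun lam (hlam : 0 < lam) => ?_)
  exact (ttbarLagrangian_eq_div_sqrt_add_one hlam.ne' (by positivity)).symm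

end

/-- The TT̄-deformed BMS free scalar Lagrangian `L(v,λ) = (√(1+4λv²) - 1)/(2λ)` satisfies
the flow equation `∂_λ L = L² - v L ∂_v L` for all `v` and `λ > 0`, and
`L(v,λ) → v²` as `λ → 0⁺`. -/
theorem ttbar_scalar_flow_equation :
    let L : ℝ → ℝ → ℝ := fun v lam => (Real.sqrt (1 + 4 * lam * v ^ 2) - 1) / (2 * lam)
    (∀ v lam : ℝ, 0 < lam →
      deriv (fun t => L v t) lam =
        (L v lam) ^ 2 - v * L v lam * deriv (fun w => L w lam) v) ∧
    (∀ v : ℝ, Tendsto (fun lam => L v lam) (nhdsWithin 0 (Set.Ioi 0)) (nhds (v ^ 2))) :=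
  ⟨fun _ _ hlam => ttbarLagrangian_flow hlam, tendsto_ttbarLagrangian_nhdsGT_zero⟩
end

section
/- Define L : ℝ × (0, ∞) → ℝ on the region 4λv < 1 by L(v, λ) = (1 - 2λv - √(1 - 4λv))/(2λ²). Then L satisfies the partial differential equation ∂_λ L = L · ∂_v L on this region, and lim_{λ → 0⁺} L(v, λ) = v². -/
open Real Filter

/-!
Write `s = √(1 - 4λv)`. The Lagrangian is the square of `u = 2v / (1 + s)`, the root of
`λu² - u + v = 0` that stays regular as `λ → 0`, where `u → v`. Differentiating the quadratic
gives `∂_v u = 1/s` and `∂_λ u = u²/s`, i.e. `∂_λ u = u² ∂_v u`, and then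
`∂_λ (u²) = 2u³/s = u² ∂_v (u²)`.
-/

noncomputable def jtLagrangian (v lam : ℝ) : ℝ :=
  (1 - 2 * lam * v - √(1 - 4 * lam * v)) / (2 * lam ^ 2)

noncomputable def regularRoot (v lam : ℝ) : ℝ :=
  2 * v / (1 + √(1 - 4 * lam * v))

theorem regularRoot_zero_right (v : ℝ) : regularRoot v 0 = v := by
  norm_num [regularRoot]

theorem jtLagrangian_eq_regularRoot_sq {v lam : ℝ} (hlam : lam ≠ 0) (h : 4 * lam * v ≤ 1) :
    jtLagrangian v lam = regularRoot v lam ^ 2 := by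
  unfold jtLagrangian regularRoot
  have hs : √(1 - 4 * lam * v) ^ 2 = 1 - 4 * lam * v := sq_sqrt (by linarith)
  have hpos : 1 + √(1 - 4 * lam * v) ≠ 0 := by positivity
  generalize √(1 - 4 * lam * v) = s at hs hpos ⊢
  field_simp
  linear_combination (-s - 1 - 2 * lam * v) * hs

theorem HasDerivAt.one_add_sqrt_one_sub {f : ℝ → ℝ} {f' x : ℝ} (hf : HasDerivAt f f' x)
    (h : f x < 1) :
    HasDerivAt (fun y => 1 + √(1 - f y)) (-f' / (2 * √(1 - f x))) x :=
  ((hf.const_sub 1).sqrt (by linarith)).const_add 1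

theorem hasDerivAt_regularRoot_left {v lam : ℝ} (h : 4 * lam * v < 1) :
    HasDerivAt (fun w => regularRoot w lam) (1 / √(1 - 4 * lam * v)) v := by
  have hnum : HasDerivAt (fun w : ℝ => 2 * w) 2 v := by
    simpa using (hasDerivAt_id' v).const_mul 2
  have hden := ((hasDerivAt_id' v).const_mul (4 * lam)).one_add_sqrt_one_sub h
  have hs : √(1 - 4 * lam * v) ^ 2 = 1 - 4 * lam * v := sq_sqrt (by linarith)
  have hs0 : 0 < √(1 - 4 * lam * v) := sqrt_pos.2 (by linarith)
  refine (hnum.div hden (by positivity)).congr_deriv ?_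
  generalize √(1 - 4 * lam * v) = s at hs hs0 ⊢
  field_simp
  linear_combination hs

theorem hasDerivAt_regularRoot_right {v lam : ℝ} (h : 4 * lam * v < 1) :
    HasDerivAt (fun t => regularRoot v t) (regularRoot v lam ^ 2 / √(1 - 4 * lam * v)) lam := by
  have hden := (((hasDerivAt_id' lam).const_mul 4).mul_const v).one_add_sqrt_one_sub h
  have hs0 : 0 < √(1 - 4 * lam * v) := sqrt_pos.2 (by linarith)
  refine ((hasDerivAt_const lam (2 * v)).div hden (by positivity)).congr_deriv ?_
  unfold regularRoot
  generalize √(1 - 4 * lam * v) = s at hs0 ⊢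
  field_simp
  ring

theorem jtLagrangian_eventuallyEq_left {v lam : ℝ} (hlam : lam ≠ 0) (h : 4 * lam * v < 1) :
    (fun w => jtLagrangian w lam) =ᶠ[nhds v] fun w => regularRoot w lam ^ 2 := by
  have hreg : ∀ᶠ w in nhds v, 4 * lam * w < 1 :=
    (show ContinuousAt (fun w => 4 * lam * w) v by fun_prop).eventually_lt continuousAt_const h
  filter_upwards [hreg] with w hw
  exact jtLagrangian_eq_regularRoot_sq hlam (le_of_lt hw)

theorem jtLagrangian_eventuallyEq_right {v lam : ℝ} (hlam : lam ≠ 0) (h : 4 * lam * v < 1) :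
    (fun t => jtLagrangian v t) =ᶠ[nhds lam] fun t => regularRoot v t ^ 2 := by
  have hreg : ∀ᶠ t in nhds lam, 4 * t * v < 1 :=
    (show ContinuousAt (fun t => 4 * t * v) lam by fun_prop).eventually_lt continuousAt_const h
  filter_upwards [eventually_ne_nhds hlam, hreg] with t ht0 ht
  exact jtLagrangian_eq_regularRoot_sq ht0 (le_of_lt ht)

theorem hasDerivAt_jtLagrangian_left {v lam : ℝ} (hlam : lam ≠ 0) (h : 4 * lam * v < 1) :
    HasDerivAt (fun w => jtLagrangian w lam) (2 * regularRoot v lam / √(1 - 4 * lam * v)) v :=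
  (((hasDerivAt_regularRoot_left h).pow 2).congr_of_eventuallyEq
    (jtLagrangian_eventuallyEq_left hlam h)).congr_deriv (by ring)

theorem hasDerivAt_jtLagrangian_right {v lam : ℝ} (hlam : lam ≠ 0) (h : 4 * lam * v < 1) :
    HasDerivAt (fun t => jtLagrangian v t) (2 * regularRoot v lam ^ 3 / √(1 - 4 * lam * v)) lam :=
  (((hasDerivAt_regularRoot_right h).pow 2).congr_of_eventuallyEq
    (jtLagrangian_eventuallyEq_right hlam h)).congr_deriv (by ring)

theorem jtLagrangian_flow_equation {v lam : ℝ} (hlam : lam ≠ 0) (h : 4 * lam * v < 1) :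
    deriv (fun t => jtLagrangian v t) lam =
      jtLagrangian v lam * deriv (fun w => jtLagrangian w lam) v := by
  rw [(hasDerivAt_jtLagrangian_right hlam h).deriv, (hasDerivAt_jtLagrangian_left hlam h).deriv,
    jtLagrangian_eq_regularRoot_sq hlam h.le]
  ring

theorem tendsto_jtLagrangian_nhdsGT_zero (v : ℝ) :
    Tendsto (fun lam => jtLagrangian v lam) (nhdsWithin 0 (Set.Ioi 0)) (nhds (v ^ 2)) := by
  have hcont : ContinuousAt (fun t => regularRoot v t) 0 :=
    (hasDerivAt_regularRoot_right (by simp)).continuousAt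
  have hsq : Tendsto (fun t => regularRoot v t ^ 2) (nhdsWithin 0 (Set.Ioi 0)) (nhds (v ^ 2)) := by
    have := hcont.tendsto.pow 2
    rw [regularRoot_zero_right] at this
    exact this.mono_left nhdsWithin_le_nhds
  have hreg : ∀ᶠ t in nhds (0 : ℝ), 4 * t * v < 1 :=
    (show ContinuousAt (fun t => 4 * t * v) 0 by fun_prop).eventually_lt continuousAt_const
      (by simp)
  refine hsq.congr' ?_
  filter_upwards [self_mem_nhdsWithin, nhdsWithin_le_nhds hreg] with t ht0 ht
  exact (jtLagrangian_eq_regularRoot_sq (ne_of_gt ht0) (le_of_lt ht)).symm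

/-- The JT_μ-deformed BMS free scalar Lagrangian `L(v,λ) = (1 - 2λv - √(1-4λv))/(2λ²)`
satisfies the flow equation `∂_λ L = L ∂_v L` on the region `λ > 0`, `4λv < 1`, and
`L(v,λ) → v²` as `λ → 0⁺`. -/
theorem jt_scalar_flow_equation :
    let L : ℝ → ℝ → ℝ := fun v lam =>
      (1 - 2 * lam * v - Real.sqrt (1 - 4 * lam * v)) / (2 * lam ^ 2)
    (∀ v lam : ℝ, 0 < lam → 4 * lam * v < 1 →
      deriv (fun t => L v t) lam = L v lam * deriv (fun w => L w lam) v) ∧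
    (∀ v : ℝ, Tendsto (fun lam => L v lam) (nhdsWithin 0 (Set.Ioi 0)) (nhds (v ^ 2))) :=
  ⟨fun _ _ hlam h => jtLagrangian_flow_equation (ne_of_gt hlam) h,
    tendsto_jtLagrangian_nhdsGT_zero⟩
end

section
/- Let n ≥ 2, let α₁, …, α_n be real numbers with Σᵢ αᵢ = 0, let (x₁, y₁), …, (x_n, y_n) be points with all xᵢ distinct, and define G = exp(-Σ_{i<j} αᵢ αⱼ (yᵢ - yⱼ)/(xᵢ - xⱼ)). Then G satisfies the global boost Ward identity Σ_{i=1}^n (xᵢ ∂_{yᵢ} + ξᵢ) G = 0 with boost charges ξᵢ = -αᵢ²/2, as well as the translation identities (Σᵢ ∂_{xᵢ}) G = 0 and (Σᵢ ∂_{yᵢ}) G = 0. -/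
/-!
Summing the partial derivatives of a differentiable function with weights `vₖ` gives its
derivative along `v`. Writing `G = exp (-S)`, the exponent `S` is unchanged when all `xᵢ` or all
`yᵢ` are shifted by the same amount, which gives the translation identities. Moving `y` along
`x` adds `t · Σ_{i<j} αᵢαⱼ` to `S`, because each quotient `(yᵢ - yⱼ)/(xᵢ - xⱼ)` grows by `t`; by
neutrality `Σ_{i<j} αᵢαⱼ = -(Σᵢ αᵢ²)/2`, so `Σᵢ xᵢ ∂_{yᵢ} G = (Σᵢ αᵢ²)/2 · G`, which is the boost
identity.
-/

open Real

section LineDeriv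

variable {𝕜 ι F : Type*} [NontriviallyNormedField 𝕜] [Fintype ι] [DecidableEq ι]
  [NormedAddCommGroup F] [NormedSpace 𝕜 F] {f : (ι → 𝕜) → F} {y : ι → 𝕜}

theorem DifferentiableAt.deriv_update_eq_fderiv (hf : DifferentiableAt 𝕜 f y) (k : ι) :
    deriv (fun t => f (Function.update y k t)) (y k) = fderiv 𝕜 f y (Pi.single k 1) := by
  rw [← Function.update_eq_self k y] at hf
  simpa [Function.comp_def] using
    (hf.hasFDerivAt.comp_hasDerivAt (y k) (hasDerivAt_update y k (y k))).deriv

theorem DifferentiableAt.sum_smul_deriv_update (hf : DifferentiableAt 𝕜 f y) (v : ι → 𝕜) :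
    ∑ k, v k • deriv (fun t => f (Function.update y k t)) (y k) = lineDeriv 𝕜 f y v := by
  simp only [hf.deriv_update_eq_fderiv, hf.lineDeriv_eq_fderiv, ← map_smul, ← map_sum,
    ← pi_eq_sum_univ' v]

end LineDeriv

theorem lineDeriv_eq_zero_of_forall_add_smul_eq {𝕜 E F : Type*} [NontriviallyNormedField 𝕜]
    [AddCommGroup E] [Module 𝕜 E] [NormedAddCommGroup F] [NormedSpace 𝕜 F] {f : E → F} {x v : E}
    (h : ∀ t : 𝕜, f (x + t • v) = f x) : lineDeriv 𝕜 f x v = 0 := by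
  simp [lineDeriv, h]

theorem two_mul_sum_ite_lt_mul {ι R : Type*} [Fintype ι] [LinearOrder ι] [CommRing R]
    (a : ι → R) :
    2 * ∑ i, ∑ j, (if i < j then a i * a j else 0) = (∑ i, a i) ^ 2 - ∑ i, a i ^ 2 := by
  have hswap : ∑ i, ∑ j, (if i < j then a i * a j else 0)
      = ∑ i, ∑ j, (if j < i then a i * a j else 0) := by
    rw [Finset.sum_comm]
    simp only [mul_comm]
  have hsplit : ∀ i j, (if i < j then a i * a j else 0) + (if j < i then a i * a j else 0)
      = a i * a j - if i = j then a i * a j else 0 := by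
    intro i j
    rcases lt_trichotomy i j with h | rfl | h
    · simp [h, h.not_gt, h.ne]
    · simp
    · simp [h, h.not_gt, h.ne']
  rw [two_mul]
  nth_rewrite 2 [hswap]
  simp only [← Finset.sum_add_distrib, hsplit, Finset.sum_sub_distrib, sq, Finset.sum_mul_sum,
    Finset.sum_ite_eq, Finset.mem_univ, if_true]

section VertexExponent

variable {ι : Type*} [Fintype ι] [LinearOrder ι] (α : ι → ℝ)

noncomputable def vertexExponent (x y : ι → ℝ) : ℝ :=
  ∑ i, ∑ j, if i < j then α i * α j * (y i - y j) / (x i - x j) else 0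

theorem vertexExponent_add_const_left (x y : ι → ℝ) (t : ℝ) :
    vertexExponent α (x + t • 1) y = vertexExponent α x y := by
  simp [vertexExponent]

theorem vertexExponent_add_const_right (x y : ι → ℝ) (t : ℝ) :
    vertexExponent α x (y + t • 1) = vertexExponent α x y := by
  simp [vertexExponent]

theorem vertexExponent_add_smul_self {x : ι → ℝ} (hx : Function.Injective x) (y : ι → ℝ)
    (t : ℝ) :
    vertexExponent α x (y + t • x) =
      vertexExponent α x y + t * ∑ i, ∑ j, if i < j then α i * α j else 0 := by
  simp only [vertexExponent, Finset.mul_sum, ← Finset.sum_add_distrib]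
  refine Finset.sum_congr rfl fun i _ => Finset.sum_congr rfl fun j _ => ?_
  split_ifs with hij
  · have : x i - x j ≠ 0 := sub_ne_zero.mpr (hx.ne hij.ne)
    simp only [Pi.add_apply, Pi.smul_apply, smul_eq_mul]
    field_simp
    ring
  · simp

theorem differentiable_vertexExponent (x : ι → ℝ) : Differentiable ℝ (vertexExponent α x) := by
  unfold vertexExponent
  refine Differentiable.fun_sum fun i _ => Differentiable.fun_sum fun j _ => ?_
  by_cases hij : i < j <;> simp only [hij, if_true, if_false] <;> fun_prop

theorem differentiableAt_vertexExponent_left {x : ι → ℝ} (hx : Function.Injective x)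
    (y : ι → ℝ) : DifferentiableAt ℝ (fun x' => vertexExponent α x' y) x := by
  unfold vertexExponent
  refine DifferentiableAt.fun_sum fun i _ => DifferentiableAt.fun_sum fun j _ => ?_
  by_cases hij : i < j <;> simp only [hij, if_true, if_false]
  · have : x i - x j ≠ 0 := sub_ne_zero.mpr (hx.ne hij.ne)
    fun_prop (disch := assumption)
  · fun_prop

theorem lineDeriv_exp_neg_vertexExponent_self {x : ι → ℝ} (hx : Function.Injective x)
    (y : ι → ℝ) :
    lineDeriv ℝ (fun y' => exp (-vertexExponent α x y')) y x =
      -(∑ i, ∑ j, if i < j then α i * α j else 0) * exp (-vertexExponent α x y) := by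
  set T := ∑ i, ∑ j, if i < j then α i * α j else 0
  have h : HasDerivAt (fun t => exp (-(vertexExponent α x y + t * T)))
      (exp (-(vertexExponent α x y + 0 * T)) * -(1 * T)) 0 :=
    (((hasDerivAt_id 0).mul_const T).const_add _).neg.exp
  simp only [lineDeriv, vertexExponent_add_smul_self α hx]
  rw [h.deriv]
  ring_nf

end VertexExponent

theorem bms_vertex_correlator_ward_general (n : ℕ) (α : Fin n → ℝ)
    (hα : ∑ i, α i = 0) (x y : Fin n → ℝ) (hx : Function.Injective x) :
    let G : (Fin n → ℝ) → (Fin n → ℝ) → ℝ := fun x' y' =>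
      Real.exp (-∑ i, ∑ j, if i < j then α i * α j * (y' i - y' j) / (x' i - x' j) else 0)
    (∑ i, (x i * deriv (fun t => G x (Function.update y i t)) (y i) +
        (-(α i) ^ 2 / 2) * G x y) = 0) ∧
    (∑ i, deriv (fun t => G (Function.update x i t) y) (x i) = 0) ∧
    (∑ i, deriv (fun t => G x (Function.update y i t)) (y i) = 0) := by
  intro G
  have hG : G = fun x' y' => exp (-vertexExponent α x' y') := rfl
  clear_value G
  subst hG
  have hdiff_y : DifferentiableAt ℝ (fun y' => exp (-vertexExponent α x y')) y :=
    (differentiable_vertexExponent α x).neg.exp y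
  have hdiff_x : DifferentiableAt ℝ (fun x' => exp (-vertexExponent α x' y)) x :=
    (differentiableAt_vertexExponent_left α hx y).neg.exp
  have hpair : ∑ i, ∑ j, (if i < j then α i * α j else 0) = -(∑ i, α i ^ 2) / 2 := by
    have h := two_mul_sum_ite_lt_mul α
    rw [hα] at h
    linarith
  have hboost := hdiff_y.sum_smul_deriv_update x
  have htrans_x := hdiff_x.sum_smul_deriv_update 1
  have htrans_y := hdiff_y.sum_smul_deriv_update 1
  simp only [smul_eq_mul, Pi.one_apply, one_mul] at hboost htrans_x htrans_y
  refine ⟨?_, ?_, ?_⟩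
  · rw [Finset.sum_add_distrib, ← Finset.sum_mul, hboost,
      lineDeriv_exp_neg_vertexExponent_self α hx, hpair]
    simp only [← Finset.sum_div, Finset.sum_neg_distrib]
    ring
  · rw [htrans_x]
    exact lineDeriv_eq_zero_of_forall_add_smul_eq fun t => by
      simp only [vertexExponent_add_const_left]
  · rw [htrans_y]
    exact lineDeriv_eq_zero_of_forall_add_smul_eq fun t => by
      simp only [vertexExponent_add_const_right]

/-- The `n`-point correlator of BMS vertex operators,
`G = exp(-Σ_{i<j} αᵢαⱼ(yᵢ-yⱼ)/(xᵢ-xⱼ))` with `Σᵢ αᵢ = 0` and distinct `xᵢ`,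
satisfies the global boost Ward identity `Σᵢ (xᵢ ∂_{yᵢ} + ξᵢ) G = 0` with
`ξᵢ = -αᵢ²/2`, and the translation identities `Σᵢ ∂_{xᵢ} G = 0`, `Σᵢ ∂_{yᵢ} G = 0`. -/
theorem bms_vertex_correlator_ward (n : ℕ) (hn : 2 ≤ n) (α : Fin n → ℝ)
    (hα : ∑ i, α i = 0) (x y : Fin n → ℝ) (hx : Function.Injective x) :
    let G : (Fin n → ℝ) → (Fin n → ℝ) → ℝ := fun x' y' =>
      Real.exp (-∑ i, ∑ j, if i < j then α i * α j * (y' i - y' j) / (x' i - x' j) else 0)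
    (∑ i, (x i * deriv (fun t => G x (Function.update y i t)) (y i) +
        (-(α i) ^ 2 / 2) * G x y) = 0) ∧
    (∑ i, deriv (fun t => G (Function.update x i t) y) (x i) = 0) ∧
    (∑ i, deriv (fun t => G x (Function.update y i t)) (y i) = 0) :=
  bms_vertex_correlator_ward_general n α hα x y hx
end

section
/- Let Δ, ξ, N be real constants, and on the region x₁ ≠ x₂ define G = N |x₁₂|^{-2Δ} exp(-2ξ y₁₂/x₁₂), where x₁₂ = x₁ - x₂, y₁₂ = y₁ - y₂. Define the first-order TT̄ correction operator D acting on functions of (x₁,y₁,x₂,y₂) by D = Σ_{(i,j) ∈ {(1,2),(2,1)}} (y_{ij}/x_{ij}) [ 2ξ²/x_{ij}² + (ξ/x_{ij})(∂_{y_i} + ∂_{y_j}) + ∂_{y_i} ∂_{y_j} ]. Then D G = -4 ξ² (y₁₂ / x₁₂³) G; in particular the first-order TT̄ correction of the BMS singlet two-point function is factorized, i.e. proportional to the undeformed two-point function times y₁₂/x₁₂³. -/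
open Real

/-
In each of `y₁`, `y₂` the two-point function is a constant times an exponential, so
`∂_{y₁} G = -(2ξ/x₁₂) G`, `∂_{y₂} G = (2ξ/x₁₂) G` and `∂_{y₁}∂_{y₂} G = -(4ξ²/x₁₂²) G`.
The first derivatives cancel in each bracket, which becomes `(2 - 4) ξ²/x₁₂² · G`, and the
two terms `(i,j) = (1,2), (2,1)` are equal since `y₂₁/x₂₁ = y₁₂/x₁₂` and `x₂₁² = x₁₂²`.
-/

lemma deriv_const_mul_exp_sub_left (c k b X y : ℝ) :
    deriv (fun t => c * exp (k * (t - b) / X)) y = k / X * c * exp (k * (y - b) / X) := by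
  have h := ((((hasDerivAt_id y).sub_const b).const_mul k).div_const X).exp.const_mul c
  simp only [id_eq, mul_one] at h
  rw [h.deriv]
  ring

lemma deriv_const_mul_exp_sub_right (c k a X y : ℝ) :
    deriv (fun s => c * exp (k * (a - s) / X)) y = -(k / X) * c * exp (k * (a - y) / X) := by
  have h := ((((hasDerivAt_id y).const_sub a).const_mul k).div_const X).exp.const_mul c
  simp only [id_eq] at h
  rw [h.deriv]
  ring

/-- The first-order TT̄ correction operator
`D = Σ_{(i,j)∈{(1,2),(2,1)}} (y_{ij}/x_{ij})[2ξ²/x_{ij}² + (ξ/x_{ij})(∂_{y_i}+∂_{y_j}) + ∂_{y_i}∂_{y_j}]`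
applied to the BMS singlet two-point function
`G = N |x₁₂|^{-2Δ} exp(-2ξ y₁₂/x₁₂)` gives `D G = -4ξ² (y₁₂/x₁₂³) G`:
the first-order TT̄ correction is factorized. -/
theorem ttbar_first_order_two_point_factorized (Δ ξ N : ℝ) :
    let G : ℝ → ℝ → ℝ → ℝ → ℝ := fun x₁ y₁ x₂ y₂ =>
      N * |x₁ - x₂| ^ (-(2 * Δ)) * Real.exp (-2 * ξ * (y₁ - y₂) / (x₁ - x₂))
    ∀ x₁ y₁ x₂ y₂ : ℝ, x₁ ≠ x₂ →
      -- (i,j) = (1,2) term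
      ((y₁ - y₂) / (x₁ - x₂)) *
          (2 * ξ ^ 2 / (x₁ - x₂) ^ 2 * G x₁ y₁ x₂ y₂ +
            ξ / (x₁ - x₂) *
              (deriv (fun t => G x₁ t x₂ y₂) y₁ + deriv (fun t => G x₁ y₁ x₂ t) y₂) +
            deriv (fun t => deriv (fun s => G x₁ t x₂ s) y₂) y₁) +
        -- (i,j) = (2,1) term
        ((y₂ - y₁) / (x₂ - x₁)) *
          (2 * ξ ^ 2 / (x₂ - x₁) ^ 2 * G x₁ y₁ x₂ y₂ +
            ξ / (x₂ - x₁) *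
              (deriv (fun t => G x₁ y₁ x₂ t) y₂ + deriv (fun t => G x₁ t x₂ y₂) y₁) +
            deriv (fun t => deriv (fun s => G x₁ s x₂ t) y₁) y₂) =
      -4 * ξ ^ 2 * ((y₁ - y₂) / (x₁ - x₂) ^ 3) * G x₁ y₁ x₂ y₂ := by
  intro G x₁ y₁ x₂ y₂ hx
  have h₁₂ : x₁ - x₂ ≠ 0 := sub_ne_zero.mpr hx
  have h₂₁ : x₂ - x₁ ≠ 0 := sub_ne_zero.mpr hx.symm
  simp only [G, deriv_const_mul_exp_sub_left, deriv_const_mul_exp_sub_right]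
  field_simp
  ring
end
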